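/- arXiv:2503.19103 — 3 statements merged into one kernel-verified Lean document; each statement's English description precedes it below -/
import Mathlib

section
/- The parity function on n ≥ 1 variables can be computed by a circuit of size 3(n−1) over the basis {∧} where negations are allowed on wires (equivalently, each gate computes one of the functions (a,b) ↦ (¬a ∧ ¬b), (¬a ∧ b), (a ∧ ¬b), (a ∧ b), possibly negated). -/
/-- A Boolean circuit as a straight-line program: wires `0,…,n-1` are the inputs,
wire `n+i` is gate `i`, which applies an arbitrary binary Boolean operation to
two earlier wires. Its size is the number of gates. -/
structure Circuit (n : ℕ) where
  size : ℕ
  op : Fin size → Bool → Bool → Bool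
  left : Fin size → ℕ
  right : Fin size → ℕ
  hleft : ∀ i : Fin size, left i < n + i.1
  hright : ∀ i : Fin size, right i < n + i.1

/-- Value of a wire of the circuit under an input assignment. -/
def Circuit.val {n : ℕ} (C : Circuit n) (x : Fin n → Bool) (w : ℕ) : Bool :=
  if h : w < n then x ⟨w, h⟩
  else if h2 : w - n < C.size then
    C.op ⟨w - n, h2⟩ (C.val x (C.left ⟨w - n, h2⟩)) (C.val x (C.right ⟨w - n, h2⟩))
  else false
termination_by w
decreasing_by
  · have := C.hleft ⟨w - n, h2⟩; simp only at this ⊢; omega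
  · have := C.hright ⟨w - n, h2⟩; simp only at this ⊢; omega

/-- The parity function. -/
def parityFun {n : ℕ} (x : Fin n → Bool) : Bool :=
  decide ((∑ i, (x i).toNat) % 2 = 1)

def parityC (n : ℕ) : Circuit n where
  size := 3 * (n - 1)
  op i a b := if i.1 % 3 = 0 then a && !b else if i.1 % 3 = 1 then !a && b else !(!a && !b)
  left i := if i.1 % 3 = 2 then n + i.1 - 2 else if i.1 < 3 then 0 else n + i.1 - i.1 % 3 - 1
  right i := if i.1 % 3 = 2 then n + i.1 - 1 else i.1 / 3 + 1
  hleft i := by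
    rcases i with ⟨i, hi⟩
    simp only
    split_ifs <;> omega
  hright i := by
    rcases i with ⟨i, hi⟩
    simp only
    split_ifs <;> omega

lemma parityC_size (n : ℕ) : (parityC n).size = 3 * (n - 1) := rfl

lemma parityC_op (n : ℕ) (w : ℕ) (h : w < (parityC n).size) (a b : Bool) :
    (parityC n).op ⟨w, h⟩ a b =
      if w % 3 = 0 then a && !b else if w % 3 = 1 then !a && b else !(!a && !b) := rfl

lemma parityC_left (n : ℕ) (w : ℕ) (h : w < (parityC n).size) :
    (parityC n).left ⟨w, h⟩ =
      if w % 3 = 2 then n + w - 2 else if w < 3 then 0 else n + w - w % 3 - 1 := rfl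

lemma parityC_right (n : ℕ) (w : ℕ) (h : w < (parityC n).size) :
    (parityC n).right ⟨w, h⟩ =
      if w % 3 = 2 then n + w - 1 else w / 3 + 1 := rfl

lemma val_lt {n} (C : Circuit n) (x : Fin n → Bool) (w : ℕ) (h : w < n) :
    C.val x w = x ⟨w, h⟩ := by
  rw [Circuit.val]; simp [h]

lemma val_gate {n} (C : Circuit n) (x : Fin n → Bool) (g : ℕ) (h2 : g < C.size) :
    C.val x (n + g) = C.op ⟨g, h2⟩ (C.val x (C.left ⟨g, h2⟩))
      (C.val x (C.right ⟨g, h2⟩)) := by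
  rw [Circuit.val]
  have h : ¬ n + g < n := by omega
  have hg : n + g - n = g := by omega
  simp only [dif_neg h, hg, dif_pos h2]

/-- The parity function on n ≥ 1 variables can be computed by a circuit of size
3(n−1) over the basis {∧} with negations allowed on wires: every gate computes
(a,b) ↦ ((a ⊕ p) ∧ (b ⊕ q)) ⊕ r for some constants p, q, r. -/
theorem parity_circuit_aig (n : ℕ) (hn : 1 ≤ n) :
    ∃ C : Circuit n, C.size = 3 * (n - 1) ∧
      (∀ i : Fin C.size, ∃ p q r : Bool,
        ∀ a b : Bool, C.op i a b = xor ((xor a p) && (xor b q)) r) ∧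
      ∀ x : Fin n → Bool, C.val x (n + C.size - 1) = parityFun x := by
  refine ⟨parityC n, rfl, ?_, ?_⟩
  · rintro ⟨w, hw⟩
    have h3 : w % 3 = 0 ∨ w % 3 = 1 ∨ w % 3 = 2 := by omega
    rcases h3 with h | h | h
    · exact ⟨false, true, false, fun a b => by rw [parityC_op, if_pos h]; cases a <;> cases b <;> rfl⟩
    · exact ⟨true, false, false, fun a b => by rw [parityC_op, if_neg (by omega), if_pos h]; cases a <;> cases b <;> rfl⟩
    · exact ⟨true, true, true, fun a b => by rw [parityC_op, if_neg (by omega), if_neg (by omega)]; cases a <;> cases b <;> rfl⟩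
  · intro x
    set x' : ℕ → Bool := fun i => if h : i < n then x ⟨i, h⟩ else false with hx'
    have key : ∀ j, j ≤ n - 1 →
        (parityC n).val x (if j = 0 then 0 else n + (3*j - 1)) =
          decide ((∑ i ∈ Finset.range (j+1), (x' i).toNat) % 2 = 1) := by
      intro j
      induction j with
      | zero =>
        intro _
        rw [if_pos rfl]
        have h0 : (0:ℕ) < n := by omega
        rw [val_lt (parityC n) x 0 h0]
        have : (∑ i ∈ Finset.range (0+1), (x' i).toNat) = (x ⟨0, h0⟩).toNat := by
          simp [hx', h0]
        rw [this]
        cases x ⟨0, h0⟩ <;> simp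
      | succ j ih =>
        intro hj
        have hjn : j + 1 < n := by omega
        have hm2 : (3*j+2) % 3 = 2 := by omega
        have hma : (3*j) % 3 = 0 := by omega
        have hmb : (3*j+1) % 3 = 1 := by omega
        have h2 : 3*j+2 < (parityC n).size := by rw [parityC_size]; omega
        have h2a : 3*j < (parityC n).size := by rw [parityC_size]; omega
        have h2b : 3*j+1 < (parityC n).size := by rw [parityC_size]; omega
        have hw : (if j+1 = 0 then 0 else n + (3*(j+1) - 1)) = n + (3*j+2) := by
          rw [if_neg (by omega)]; omega
        have L2 : (parityC n).left ⟨3*j+2, h2⟩ = n + 3*j := by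
          rw [parityC_left, if_pos hm2]; omega
        have R2 : (parityC n).right ⟨3*j+2, h2⟩ = n + (3*j+1) := by
          rw [parityC_right, if_pos hm2]; omega
        have La : (parityC n).left ⟨3*j, h2a⟩ = (if j = 0 then 0 else n + (3*j-1)) := by
          rw [parityC_left, if_neg (by omega)]; split_ifs <;> omega
        have Ra : (parityC n).right ⟨3*j, h2a⟩ = j+1 := by
          rw [parityC_right, if_neg (by omega)]; omega
        have Lb : (parityC n).left ⟨3*j+1, h2b⟩ = (if j = 0 then 0 else n + (3*j-1)) := by
          rw [parityC_left, if_neg (by omega)]; split_ifs <;> omega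
        have Rb : (parityC n).right ⟨3*j+1, h2b⟩ = j+1 := by
          rw [parityC_right, if_neg (by omega)]; omega
        have O2 : ∀ a b, (parityC n).op ⟨3*j+2, h2⟩ a b = !(!a && !b) := fun a b => by
          rw [parityC_op, if_neg (by omega), if_neg (by omega)]
        have Oa : ∀ a b, (parityC n).op ⟨3*j, h2a⟩ a b = (a && !b) := fun a b => by
          rw [parityC_op, if_pos hma]
        have Ob : ∀ a b, (parityC n).op ⟨3*j+1, h2b⟩ a b = (!a && b) := fun a b => by
          rw [parityC_op, if_neg (by omega), if_pos hmb]
        rw [hw, val_gate (parityC n) x (3*j+2) h2, L2, R2,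
            val_gate (parityC n) x (3*j) h2a, val_gate (parityC n) x (3*j+1) h2b,
            La, Ra, Lb, Rb, O2, Oa, Ob,
            val_lt (parityC n) x (j+1) hjn, ih (by omega)]
        have hxj : x ⟨j+1, hjn⟩ = x' (j+1) := by rw [hx']; simp [hjn]
        rw [hxj]
        have hsum2 : (∑ i ∈ Finset.range (j+1+1), (x' i).toNat)
            = (∑ i ∈ Finset.range (j+1), (x' i).toNat) + (x' (j+1)).toNat :=
          Finset.sum_range_succ _ _
        rw [hsum2]
        generalize (∑ i ∈ Finset.range (j+1), (x' i).toNat) = s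
        have hmod : s % 2 = 0 ∨ s % 2 = 1 := by omega
        cases hb : x' (j+1) <;> rcases hmod with h | h <;>
          simp [h, Nat.add_mod]
    have hfin := key (n-1) le_rfl
    have hsum : (∑ i, (x i).toNat) = ∑ i ∈ Finset.range n, (x' i).toNat := by
      rw [← Fin.sum_univ_eq_sum_range]
      apply Finset.sum_congr rfl
      intro i _
      rw [hx']; simp [i.isLt]
    have hout : n + (parityC n).size - 1 = (if n - 1 = 0 then 0 else n + (3*(n-1) - 1)) := by
      rw [parityC_size]; split_ifs <;> omega
    have hrn : n - 1 + 1 = n := by omega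
    rw [hout, hfin, parityFun, hsum, hrn]
end

section
/- Let C be a Boolean circuit and X a set of gates that is a proper subcircuit generator witnessed by gate v, i.e., v ∈ g(X) and for every proper subset Y ⊊ X, v ∉ g(Y). Then for every x ∈ X there is an ascending path π from v to an input gate such that π ∩ X = {x}. -/
/-- A Boolean circuit as a finite DAG: `pred v = none` means `v` is an input
gate, otherwise `v` has exactly two predecessors. -/
structure BoolCircuit where
  V : Type
  fintype : Fintype V
  pred : V → Option (V × V)
  acyclic : WellFounded (fun a b : V => ∃ w, pred b = some (a, w) ∨ pred b = some (w, a))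

namespace BoolCircuit

/-- `Path C v L` : `L` is an ascending path from `v` (following predecessor
edges) ending at an input gate. -/
inductive Path (C : BoolCircuit) : C.V → List C.V → Prop
  | input (v : C.V) : C.pred v = none → Path C v [v]
  | step (v u : C.V) (L : List C.V) :
      (∃ w, C.pred v = some (u, w) ∨ C.pred v = some (w, u)) →
      Path C u L → Path C v (v :: L)

/-- `g C X` : the set of gates determined by `X`, i.e. gates all of whose
ascending paths to the inputs pass through `X`. -/
def g (C : BoolCircuit) (X : Set C.V) : Set C.V :=
  {w | ∀ L, C.Path w L → ∃ x ∈ X, x ∈ L}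

/-- `S C k v` : the set of `k`-element proper subcircuit generators for `v`:
sets `X` of `k` gates with `v ∈ g(X)` and `v ∉ g(Y)` for every `Y ⊊ X`. -/
def S (C : BoolCircuit) (k : ℕ) (v : C.V) : Set (Set C.V) :=
  {X | X.ncard = k ∧ v ∈ C.g X ∧ ∀ Y : Set C.V, Y ⊂ X → v ∉ C.g Y}

end BoolCircuit

/-- If `X` is a proper subcircuit generator witnessed by `v`, then for every
`x ∈ X` there is an ascending path `π` from `v` to an input with `π ∩ X = {x}`. -/
theorem path_through_single_generator_gate (C : BoolCircuit) (X : Set C.V) (v : C.V)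
    (hv : v ∈ C.g X) (hmin : ∀ Y : Set C.V, Y ⊂ X → v ∉ C.g Y) :
    ∀ x ∈ X, ∃ L : List C.V, C.Path v L ∧ ∀ y ∈ X, (y ∈ L ↔ y = x) := by
  intro x hx
  have hsub : X \ {x} ⊂ X := Set.sdiff_singleton_ssubset.mpr hx
  have hng := hmin (X \ {x}) hsub
  simp only [BoolCircuit.g, Set.mem_setOf_eq, not_forall] at hng
  obtain ⟨L, hL, hnone⟩ := hng
  push_neg at hnone
  refine ⟨L, hL, fun y hy => ⟨fun hyL => ?_, fun hyx => ?_⟩⟩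
  · by_contra hne
    exact absurd hyL (hnone y ⟨hy, hne⟩)
  · subst hyx
    obtain ⟨z, hzX, hzL⟩ := hv L hL
    have : z = y := by
      by_contra hne
      exact absurd hzL (hnone z ⟨hzX, hne⟩)
    rwa [this] at hzL
end

section
/- Let C be a Boolean circuit and v a gate. Suppose S₂(v) ≠ ∅, where S₂(v) is the set of two-element proper subcircuit generators X with v ∈ g(X) and v ∉ g(Y) for every Y ⊊ X. Then there exists X ∈ S₂(v) such that for all Y ∈ S₂(v), g(Y) ⊆ g(X). -/
namespace BoolCircuit

/-- First hit of a path in a set `T`, together with the possibility to replace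
the rest of the path by any path from the hit point. -/
lemma exists_first (C : BoolCircuit) {T : Set C.V} {u : C.V} {L : List C.V}
    (hL : C.Path u L) (hx : ∃ x ∈ L, x ∈ T) :
    ∃ z L1, z ∈ T ∧ z ∈ L ∧ (∀ y ∈ L1, y ∉ T) ∧
      ∀ M, C.Path z M → C.Path u (L1 ++ M) := by
  induction hL with
  | input w hw =>
    obtain ⟨x, hxL, hxT⟩ := hx
    simp only [List.mem_singleton] at hxL
    subst hxL
    exact ⟨x, [], hxT, by simp, by simp, fun M hM => hM⟩
  | step w u' L' hrel hP ih =>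
    by_cases hw : w ∈ T
    · exact ⟨w, [], hw, by simp, by simp, fun M hM => hM⟩
    · have hx' : ∃ x ∈ L', x ∈ T := by
        obtain ⟨x, hxL, hxT⟩ := hx
        rcases List.mem_cons.mp hxL with rfl | hmem
        · exact absurd hxT hw
        · exact ⟨x, hmem, hxT⟩
      obtain ⟨z, L1, h1, h2, h3, h4⟩ := ih hx'
      refine ⟨z, w :: L1, h1, List.mem_cons_of_mem _ h2, ?_, ?_⟩
      · intro y hy
        rcases List.mem_cons.mp hy with rfl | hmem
        · exact hw
        · exact h3 y hmem
      · intro M hM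
        exact Path.step w u' _ hrel (h4 M hM)

/-- Last hit of a path in a set `T`: the suffix from the hit point is a path
avoiding `T` afterwards. -/
lemma exists_last (C : BoolCircuit) {T : Set C.V} {u : C.V} {L : List C.V}
    (hL : C.Path u L) (hx : ∃ x ∈ L, x ∈ T) :
    ∃ z L2, z ∈ T ∧ z ∈ L ∧ C.Path z (z :: L2) ∧ ∀ y ∈ L2, y ∉ T := by
  induction hL with
  | input w hw =>
    obtain ⟨x, hxL, hxT⟩ := hx
    simp only [List.mem_singleton] at hxL
    subst hxL
    exact ⟨x, [], hxT, by simp, Path.input x hw, by simp⟩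
  | step w u' L' hrel hP ih =>
    by_cases hl : ∃ x ∈ L', x ∈ T
    · obtain ⟨z, L2, h1, h2, h3, h4⟩ := ih hl
      exact ⟨z, L2, h1, List.mem_cons_of_mem _ h2, h3, h4⟩
    · obtain ⟨x, hxL, hxT⟩ := hx
      push_neg at hl
      rcases List.mem_cons.mp hxL with rfl | hmem
      · exact ⟨x, L', hxT, List.mem_cons_self, Path.step x u' L' hrel hP, hl⟩
      · exact absurd hxT (hl x hmem)

/-- Meet: `g X ∩ g Y ⊆ g ((X ∩ g Y) ∪ (Y ∩ g X))`. -/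
lemma meet_subset (C : BoolCircuit) (X Y : Set C.V) :
    C.g X ∩ C.g Y ⊆ C.g ((X ∩ C.g Y) ∪ (Y ∩ C.g X)) := by
  rintro u ⟨huX, huY⟩ L hL
  have hhit : ∃ x ∈ L, x ∈ X ∪ Y := by
    obtain ⟨x, hx1, hx2⟩ := huX L hL
    exact ⟨x, hx2, Or.inl hx1⟩
  obtain ⟨z, L1, hzT, hzL, hL1, hrepl⟩ := C.exists_first hL hhit
  rcases hzT with hzX | hzY
  · refine ⟨z, Or.inl ⟨hzX, ?_⟩, hzL⟩
    intro M hM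
    obtain ⟨y, hy1, hy2⟩ := huY (L1 ++ M) (hrepl M hM)
    rcases List.mem_append.mp hy2 with hmem | hmem
    · exact absurd (Or.inr hy1) (hL1 y hmem)
    · exact ⟨y, hy1, hmem⟩
  · refine ⟨z, Or.inr ⟨hzY, ?_⟩, hzL⟩
    intro M hM
    obtain ⟨y, hy1, hy2⟩ := huX (L1 ++ M) (hrepl M hM)
    rcases List.mem_append.mp hy2 with hmem | hmem
    · exact absurd (Or.inl hy1) (hL1 y hmem)
    · exact ⟨y, hy1, hmem⟩

/-- Join: `g X ∪ g Y ⊆ g ((X \ (g Y \ Y)) ∪ (Y \ (g X \ X)))`. -/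
lemma join_subset (C : BoolCircuit) (X Y : Set C.V) :
    C.g X ∪ C.g Y ⊆ C.g ((X \ (C.g Y \ Y)) ∪ (Y \ (C.g X \ X))) := by
  intro u hu L hL
  have hhit : ∃ x ∈ L, x ∈ X ∪ Y := by
    rcases hu with hu | hu
    · obtain ⟨x, hx1, hx2⟩ := hu L hL
      exact ⟨x, hx2, Or.inl hx1⟩
    · obtain ⟨x, hx1, hx2⟩ := hu L hL
      exact ⟨x, hx2, Or.inr hx1⟩
  obtain ⟨z, L2, hzT, hzL, hPz, hL2⟩ := C.exists_last hL hhit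
  rcases hzT with hzX | hzY
  · refine ⟨z, Or.inl ⟨hzX, ?_⟩, hzL⟩
    rintro ⟨hzgY, hzY⟩
    obtain ⟨y, hy1, hy2⟩ := hzgY (z :: L2) hPz
    rcases List.mem_cons.mp hy2 with rfl | hmem
    · exact hzY hy1
    · exact hL2 y hmem (Or.inr hy1)
  · refine ⟨z, Or.inr ⟨hzY, ?_⟩, hzL⟩
    rintro ⟨hzgX, hzX⟩
    obtain ⟨y, hy1, hy2⟩ := hzgX (z :: L2) hPz
    rcases List.mem_cons.mp hy2 with rfl | hmem
    · exact hzX hy1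
    · exact hL2 y hmem (Or.inl hy1)

/-- A cut of size at most 1 contained in the union of two minimal 2-cuts
contradicts minimality. -/
lemma no_small_cut (C : BoolCircuit) {v : C.V} {X Y W : Set C.V}
    (hX : X ∈ C.S 2 v) (hY : Y ∈ C.S 2 v) (hWsub : W ⊆ X ∪ Y)
    (hW1 : W.ncard ≤ 1) (hv : v ∈ C.g W) : False := by
  haveI := C.fintype
  have hfin : W.Finite := Set.toFinite W
  rcases (Set.ncard_le_one_iff_eq hfin).mp hW1 with rfl | ⟨w, rfl⟩
  · have hne : X.Nonempty := Set.nonempty_of_ncard_ne_zero (by rw [hX.1]; norm_num)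
    exact hX.2.2 ∅ (Set.empty_ssubset.mpr hne) hv
  · have hwXY : w ∈ X ∪ Y := hWsub (Set.mem_singleton w)
    rcases hwXY with hw | hw
    · refine hX.2.2 {w} ⟨Set.singleton_subset_iff.mpr hw, fun hsub => ?_⟩ hv
      have : X.ncard ≤ ({w} : Set C.V).ncard := Set.ncard_le_ncard hsub (Set.toFinite _)
      rw [hX.1, Set.ncard_singleton] at this; omega
    · refine hY.2.2 {w} ⟨Set.singleton_subset_iff.mpr hw, fun hsub => ?_⟩ hv
      have : Y.ncard ≤ ({w} : Set C.V).ncard := Set.ncard_le_ncard hsub (Set.toFinite _)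
      rw [hY.1, Set.ncard_singleton] at this; omega

/-- Join lemma: two elements of `S₂(v)` have a common upper bound in `S₂(v)`. -/
lemma join_mem (C : BoolCircuit) {v : C.V} {X Y : Set C.V}
    (hX : X ∈ C.S 2 v) (hY : Y ∈ C.S 2 v) :
    ∃ Z ∈ C.S 2 v, C.g X ⊆ C.g Z ∧ C.g Y ⊆ C.g Z := by
  haveI := C.fintype
  set Z : Set C.V := (X \ (C.g Y \ Y)) ∪ (Y \ (C.g X \ X)) with hZdef
  set W : Set C.V := (X ∩ C.g Y) ∪ (Y ∩ C.g X) with hWdef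
  have hZsub : Z ⊆ X ∪ Y := by
    rintro u (⟨hu, -⟩ | ⟨hu, -⟩); exacts [Or.inl hu, Or.inr hu]
  have hWsub : W ⊆ X ∪ Y := by
    rintro u (⟨hu, -⟩ | ⟨hu, -⟩); exacts [Or.inl hu, Or.inr hu]
  have hvZ : v ∈ C.g Z := C.join_subset X Y (Or.inl hX.2.1)
  have hvW : v ∈ C.g W := C.meet_subset X Y ⟨hX.2.1, hY.2.1⟩
  -- the inter of Z and W sits inside X ∩ Y
  have hZW_inter : Z ∩ W ⊆ X ∩ Y := by
    rintro u ⟨hz, hw⟩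
    have hYg : Y ⊆ C.g Y := fun y hy L hL => ⟨y, hy, by
      cases hL with
      | input _ _ => exact List.mem_singleton_self _
      | step _ _ _ _ _ => exact List.mem_cons_self⟩
    have hXg : X ⊆ C.g X := fun x hx L hL => ⟨x, hx, by
      cases hL with
      | input _ _ => exact List.mem_singleton_self _
      | step _ _ _ _ _ => exact List.mem_cons_self⟩
    rcases hw with ⟨huX, hugY⟩ | ⟨huY, hugX⟩
    · rcases hz with ⟨-, hnot⟩ | ⟨huY, -⟩
      · constructor
        · exact huX
        · by_contra huY
          exact hnot ⟨hugY, huY⟩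
      · exact ⟨huX, huY⟩
    · rcases hz with ⟨huX, -⟩ | ⟨-, hnot⟩
      · exact ⟨huX, huY⟩
      · constructor
        · by_contra huX
          exact hnot ⟨hugX, huX⟩
        · exact huY
  -- counting
  have hcount : Z.ncard + W.ncard ≤ X.ncard + Y.ncard := by
    have h1 : Z.ncard + W.ncard = (Z ∪ W).ncard + (Z ∩ W).ncard := by
      rw [Set.ncard_union_add_ncard_inter Z W (Set.toFinite _) (Set.toFinite _)]
    have h2 : (Z ∪ W).ncard ≤ (X ∪ Y).ncard :=
      Set.ncard_le_ncard (Set.union_subset hZsub hWsub) (Set.toFinite _)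
    have h3 : (Z ∩ W).ncard ≤ (X ∩ Y).ncard :=
      Set.ncard_le_ncard hZW_inter (Set.toFinite _)
    have h4 : (X ∪ Y).ncard + (X ∩ Y).ncard = X.ncard + Y.ncard :=
      Set.ncard_union_add_ncard_inter X Y (Set.toFinite _) (Set.toFinite _)
    omega
  have hW2 : 2 ≤ W.ncard := by
    by_contra hlt
    exact C.no_small_cut hX hY hWsub (by omega) hvW
  have hZ2 : 2 ≤ Z.ncard := by
    by_contra hlt
    exact C.no_small_cut hX hY hZsub (by omega) hvZ
  have hZcard : Z.ncard = 2 := by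
    rw [hX.1, hY.1] at hcount; omega
  refine ⟨Z, ⟨hZcard, hvZ, ?_⟩, fun u hu => C.join_subset X Y (Or.inl hu),
    fun u hu => C.join_subset X Y (Or.inr hu)⟩
  intro Y' hY' hvY'
  have hlt : Y'.ncard < Z.ncard := Set.ncard_lt_ncard hY' (Set.toFinite _)
  rw [hZcard] at hlt
  exact C.no_small_cut hX hY (fun u hu => hZsub (hY'.1 hu)) (by omega) hvY'

end BoolCircuit

/-- If `S₂(v) ≠ ∅` then it contains a topologically highest generator `X`:
`g(Y) ⊆ g(X)` for all `Y ∈ S₂(v)`. -/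
theorem two_principal (C : BoolCircuit) (v : C.V) (h : (C.S 2 v).Nonempty) :
    ∃ X ∈ C.S 2 v, ∀ Y ∈ C.S 2 v, C.g Y ⊆ C.g X := by
  haveI := C.fintype
  obtain ⟨X, hX, hmax⟩ := Set.Finite.exists_maximalFor C.g (C.S 2 v) (Set.toFinite _) h
  refine ⟨X, hX, fun Y hY => ?_⟩
  obtain ⟨Z, hZ, hXZ, hYZ⟩ := C.join_mem hX hY
  have := hmax hZ hXZ
  exact hYZ.trans this
end
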